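/- Let X be a compact metric space and f : X → X a continuous map. If U and U' are attracting neighborhoods, then U ∪ U' and U ∩ U' are attracting neighborhoods, and ω(U ∪ U') = ω(U) ∪ ω(U') and ω(U ∩ U') = Inv(ω(U) ∩ ω(U')). Consequently, if A and A' are attractors, then A ∪ A' and Inv(A ∩ A') are attractors. -/

import Mathlib

open Set

/-- The maximal invariant set in `U`: the union of all subsets `S ⊆ U` with `f '' S = S`. -/
def MaxInv {Y : Type*} (f : Y → Y) (U : Set Y) : Set Y :=
  ⋃₀ {S : Set Y | S ⊆ U ∧ f '' S = S}

/-- The maximal forward invariant set in `U`: the union of all subsets `S ⊆ U`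
with `f '' S ⊆ S`. -/
def MaxInvPlus {Y : Type*} (f : Y → Y) (U : Set Y) : Set Y :=
  ⋃₀ {S : Set Y | S ⊆ U ∧ f '' S ⊆ S}

/-- The omega-limit set `ω(U) = ⋂_{n ≥ 0} cl (⋃_{m ≥ n} f^[m] '' U)`. -/
def OmegaLim {Y : Type*} [TopologicalSpace Y] (f : Y → Y) (U : Set Y) : Set Y :=
  ⋂ n : ℕ, closure (⋃ m ≥ n, f^[m] '' U)

/-- The alpha-limit set `α(U) = ⋂_{n ≥ 0} cl (⋃_{m ≥ n} (f^[m]) ⁻¹' U)`. -/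
def AlphaLim {Y : Type*} [TopologicalSpace Y] (f : Y → Y) (U : Set Y) : Set Y :=
  ⋂ n : ℕ, closure (⋃ m ≥ n, f^[m] ⁻¹' U)

/-- A trapping region: a forward invariant set `U` with `f^[n] '' cl U ⊆ int U`
for some `n ≥ 1`. -/
def IsTrappingRegion {Y : Type*} [TopologicalSpace Y] (f : Y → Y) (U : Set Y) : Prop :=
  f '' U ⊆ U ∧ ∃ n : ℕ, 1 ≤ n ∧ f^[n] '' closure U ⊆ interior U

/-- An attractor: `A = Inv(U)` for some trapping region `U`. -/
def IsAttractor {Y : Type*} [TopologicalSpace Y] (f : Y → Y) (A : Set Y) : Prop :=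
  ∃ U : Set Y, IsTrappingRegion f U ∧ A = MaxInv f U

/-- An attracting neighborhood: `ω(U) ⊆ int U`. -/
def IsAttractingNbhd {Y : Type*} [TopologicalSpace Y] (f : Y → Y) (U : Set Y) : Prop :=
  OmegaLim f U ⊆ interior U

/-- A repelling region: a backward invariant set `U` with `(f^[n]) ⁻¹' cl U ⊆ int U`
for some `n ≥ 1`. -/
def IsRepellingRegion {Y : Type*} [TopologicalSpace Y] (f : Y → Y) (U : Set Y) : Prop :=
  f ⁻¹' U ⊆ U ∧ ∃ n : ℕ, 1 ≤ n ∧ f^[n] ⁻¹' closure U ⊆ interior U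

/-- A repeller: `R = Inv⁺(U)` for some repelling region `U`. -/
def IsRepeller {Y : Type*} [TopologicalSpace Y] (f : Y → Y) (R : Set Y) : Prop :=
  ∃ U : Set Y, IsRepellingRegion f U ∧ R = MaxInvPlus f U

/-- A repelling neighborhood: `α(U) ⊆ int U`. -/
def IsRepellingNbhd {Y : Type*} [TopologicalSpace Y] (f : Y → Y) (U : Set Y) : Prop :=
  AlphaLim f U ⊆ interior U

/-- A backward orbit: a sequence `γ : ℕ → Y` with `f (γ (k+1)) = γ k` for all `k`.
A backward orbit through `x` additionally satisfies `γ 0 = x`. -/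
def IsBackwardOrbit {Y : Type*} (f : Y → Y) (γ : ℕ → Y) : Prop :=
  ∀ k : ℕ, f (γ (k + 1)) = γ k

/-- The orbital alpha-limit set `α_o(γ) = ⋂_{n ≥ 0} cl {γ m : m ≥ n}`. -/
def OrbAlpha {Y : Type*} [TopologicalSpace Y] (γ : ℕ → Y) : Set Y :=
  ⋂ n : ℕ, closure (γ '' {m : ℕ | n ≤ m})

/-- The dual repeller of an attractor `A`: `A* = {x : ω(x) ∩ A = ∅}`. -/
def DualRepeller {Y : Type*} [TopologicalSpace Y] (f : Y → Y) (A : Set Y) : Set Y :=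
  {x : Y | OmegaLim f {x} ∩ A = ∅}

/-- The dual attractor of a repeller `R`:
`R* = {x : ∃ backward orbit γ through x with α_o(γ) ∩ R = ∅}`. -/
def DualAttractor {Y : Type*} [TopologicalSpace Y] (f : Y → Y) (R : Set Y) : Set Y :=
  {x : Y | ∃ γ : ℕ → Y, γ 0 = x ∧ IsBackwardOrbit f γ ∧ OrbAlpha γ ∩ R = ∅}

/-!
In a compact Hausdorff space `ω(U)` is invariant: `f` maps the closed tail
`cl (⋃_{m ≥ n} f^m U)` onto the next one, and a continuous map on a compact space commutes
with decreasing intersections of closed sets. Every invariant subset of `U` lies in `ω(U)`,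
so `ω(U) = Inv(U)` as soon as `ω(U) ⊆ U`; this gives the formula for `ω(U ∩ U')`, while
`ω(U ∪ U') = ω(U) ∪ ω(U')` because the tails decrease. A trapping region `V` is an attracting
neighbourhood with attractor `Inv(V) = ω(V)`, and trapping regions are closed under `∪` and `∩`,
so the statements about attractors follow from those about `ω`.
-/

open Function Filter

section ForwardTail

variable {X : Type*} {f : X → X} {S U : Set X}

def forwardTail (f : X → X) (U : Set X) (n : ℕ) : Set X := ⋃ m ≥ n, f^[m] '' U

lemma forwardTail_antitone : Antitone (forwardTail f U) :=
  fun _ _ hnm => biUnion_subset_biUnion_left fun _ hm => le_trans hnm hm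

lemma image_forwardTail (n : ℕ) : f '' forwardTail f U n = forwardTail f U (n + 1) := by
  simp only [forwardTail, iUnion_ge_eq_iUnion_nat_add, image_iUnion, ← image_comp,
    ← iterate_succ']
  rfl

lemma forwardTail_union (V : Set X) (n : ℕ) :
    forwardTail f (U ∪ V) n = forwardTail f U n ∪ forwardTail f V n := by
  simp only [forwardTail, image_union, iUnion_union_distrib]

lemma subset_forwardTail (hSU : S ⊆ U) (hS : f '' S = S) (n : ℕ) : S ⊆ forwardTail f U n :=
  calc S = f^[n] '' S := (IsFixedPt.image_iterate hS n).symm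
    _ ⊆ f^[n] '' U := image_mono hSU
    _ ⊆ forwardTail f U n := subset_iUnion₂ (s := fun m (_ : m ≥ n) => f^[m] '' U) n le_rfl

lemma subset_maxInv (hSU : S ⊆ U) (hS : f '' S = S) : S ⊆ MaxInv f U :=
  subset_sUnion_of_mem ⟨hSU, hS⟩

end ForwardTail

section Topological

variable {X : Type*} [TopologicalSpace X] {f : X → X} {S U V : Set X}

lemma omegaLim_eq_iInter_closure_forwardTail :
    OmegaLim f U = ⋂ n, closure (forwardTail f U n) := rfl

lemma antitone_closure_forwardTail : Antitone fun n => closure (forwardTail f U n) :=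
  fun _ _ hnm => closure_mono (forwardTail_antitone hnm)

lemma omegaLim_mono (h : U ⊆ V) : OmegaLim f U ⊆ OmegaLim f V :=
  iInter_mono fun _ => closure_mono <| iUnion₂_mono fun _ _ => image_mono h

lemma omegaLim_union : OmegaLim f (U ∪ V) = OmegaLim f U ∪ OmegaLim f V := by
  simp only [omegaLim_eq_iInter_closure_forwardTail, forwardTail_union, closure_union]
  exact iInter_union_of_antitone antitone_closure_forwardTail antitone_closure_forwardTail

lemma subset_omegaLim (hSU : S ⊆ U) (hS : f '' S = S) : S ⊆ OmegaLim f U :=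
  subset_iInter fun n => (subset_forwardTail hSU hS n).trans subset_closure

lemma maxInv_subset_omegaLim : MaxInv f U ⊆ OmegaLim f U :=
  sUnion_subset fun _ ⟨hSU, hS⟩ => subset_omegaLim hSU hS

lemma omegaLim_subset_closure (hU : MapsTo f U U) : OmegaLim f U ⊆ closure U :=
  (iInter_subset _ 0).trans <| closure_mono <| iUnion₂_subset fun m _ =>
    (hU.iterate m).image_subset

lemma IsAttractingNbhd.omegaLim_subset (hU : IsAttractingNbhd f U) : OmegaLim f U ⊆ U :=
  hU.trans interior_subset

lemma IsAttractingNbhd.union (hU : IsAttractingNbhd f U) (hV : IsAttractingNbhd f V) :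
    IsAttractingNbhd f (U ∪ V) := by
  rw [IsAttractingNbhd, omegaLim_union]
  exact (union_subset_union hU hV).trans subset_interior_union

lemma IsAttractingNbhd.inter (hU : IsAttractingNbhd f U) (hV : IsAttractingNbhd f V) :
    IsAttractingNbhd f (U ∩ V) := by
  rw [IsAttractingNbhd, interior_inter]
  exact subset_inter ((omegaLim_mono inter_subset_left).trans hU)
    ((omegaLim_mono inter_subset_right).trans hV)

lemma IsTrappingRegion.mapsTo (hU : IsTrappingRegion f U) : MapsTo f U U :=
  mapsTo_iff_image_subset.2 hU.1

lemma IsTrappingRegion.eventually_image_closure_subset_interior (hf : Continuous f)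
    (hU : IsTrappingRegion f U) : ∀ᶠ m in atTop, f^[m] '' closure U ⊆ interior U := by
  obtain ⟨n, -, hn⟩ := hU.2
  filter_upwards [eventually_ge_atTop n] with m hm
  obtain ⟨k, rfl⟩ := Nat.exists_eq_add_of_le hm
  rw [iterate_add, image_comp]
  exact (image_mono ((hU.mapsTo.closure hf).iterate k).image_subset).trans hn

lemma IsTrappingRegion.union (hf : Continuous f) (hU : IsTrappingRegion f U)
    (hV : IsTrappingRegion f V) : IsTrappingRegion f (U ∪ V) := by
  obtain ⟨m, ⟨hUm, hVm⟩, hm⟩ := ((hU.eventually_image_closure_subset_interior hf).and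
    (hV.eventually_image_closure_subset_interior hf)).and (eventually_ge_atTop 1) |>.exists
  refine ⟨(hU.mapsTo.union_union hV.mapsTo).image_subset, m, hm, ?_⟩
  rw [closure_union, image_union]
  exact (union_subset_union hUm hVm).trans subset_interior_union

lemma IsTrappingRegion.inter (hf : Continuous f) (hU : IsTrappingRegion f U)
    (hV : IsTrappingRegion f V) : IsTrappingRegion f (U ∩ V) := by
  obtain ⟨m, ⟨hUm, hVm⟩, hm⟩ := ((hU.eventually_image_closure_subset_interior hf).and
    (hV.eventually_image_closure_subset_interior hf)).and (eventually_ge_atTop 1) |>.exists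
  refine ⟨(hU.mapsTo.inter_inter hV.mapsTo).image_subset, m, hm, ?_⟩
  rw [interior_inter]
  exact subset_inter ((image_mono (closure_mono inter_subset_left)).trans hUm)
    ((image_mono (closure_mono inter_subset_right)).trans hVm)

end Topological

lemma Continuous.image_iInter_of_directed {X Y ι : Type*} [TopologicalSpace X] [CompactSpace X]
    [TopologicalSpace Y] [T1Space Y] [Nonempty ι] {f : X → Y} (hf : Continuous f)
    {K : ι → Set X} (hK : Directed (· ⊇ ·) K) (hKc : ∀ i, IsClosed (K i)) :
    f '' ⋂ i, K i = ⋂ i, f '' K i := by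
  refine (image_iInter_subset K f).antisymm fun y hy => ?_
  have hfiber : ∀ i, IsClosed (K i ∩ f ⁻¹' {y}) :=
    fun i => (hKc i).inter (isClosed_singleton.preimage hf)
  obtain ⟨x, hx⟩ := IsCompact.nonempty_iInter_of_directed_nonempty_isCompact_isClosed
    (fun i => K i ∩ f ⁻¹' {y})
    (hK.mono_comp (· ⊇ ·) (g := (· ∩ f ⁻¹' {y})) fun _ _ h => inter_subset_inter_left _ h)
    (fun i => by obtain ⟨x, hx, rfl⟩ := mem_iInter.1 hy i; exact ⟨x, hx, rfl⟩)
    (fun i => (hfiber i).isCompact) hfiber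
  rw [mem_iInter] at hx
  exact ⟨x, mem_iInter.2 fun i => (hx i).1, (hx (Classical.arbitrary ι)).2⟩

section Compact

variable {X : Type*} [TopologicalSpace X] [CompactSpace X] [T2Space X] {f : X → X}
  {U V A A' : Set X}

lemma image_omegaLim (hf : Continuous f) : f '' OmegaLim f U = OmegaLim f U := by
  rw [omegaLim_eq_iInter_closure_forwardTail, hf.image_iInter_of_directed
    antitone_closure_forwardTail.directed_ge fun _ => isClosed_closure]
  simp only [← hf.isClosedMap.closure_image_eq_of_continuous hf, image_forwardTail]
  exact antitone_closure_forwardTail.iInter_nat_add 1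

lemma maxInv_eq_omegaLim (hf : Continuous f) (hU : OmegaLim f U ⊆ U) :
    MaxInv f U = OmegaLim f U :=
  maxInv_subset_omegaLim.antisymm <| subset_maxInv hU (image_omegaLim hf)

lemma omegaLim_inter (hf : Continuous f) (hU : OmegaLim f U ⊆ U) (hV : OmegaLim f V ⊆ V) :
    OmegaLim f (U ∩ V) = MaxInv f (OmegaLim f U ∩ OmegaLim f V) :=
  (subset_maxInv (subset_inter (omegaLim_mono inter_subset_left)
    (omegaLim_mono inter_subset_right)) (image_omegaLim hf)).antisymm <|
  sUnion_subset fun _ ⟨hS, hSinv⟩ => subset_omegaLim (hS.trans (inter_subset_inter hU hV)) hSinv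

lemma IsTrappingRegion.isAttractingNbhd (hf : Continuous f) (hU : IsTrappingRegion f U) :
    IsAttractingNbhd f U := by
  obtain ⟨n, -, hn⟩ := hU.2
  calc OmegaLim f U = f^[n] '' OmegaLim f U := (IsFixedPt.image_iterate (image_omegaLim hf) n).symm
    _ ⊆ f^[n] '' closure U := image_mono (omegaLim_subset_closure hU.mapsTo)
    _ ⊆ interior U := hn

lemma IsTrappingRegion.maxInv_eq_omegaLim (hf : Continuous f) (hU : IsTrappingRegion f U) :
    MaxInv f U = OmegaLim f U :=
  _root_.maxInv_eq_omegaLim hf (hU.isAttractingNbhd hf).omegaLim_subset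

lemma IsAttractor.union (hf : Continuous f) (hA : IsAttractor f A) (hA' : IsAttractor f A') :
    IsAttractor f (A ∪ A') := by
  obtain ⟨U, hU, rfl⟩ := hA
  obtain ⟨V, hV, rfl⟩ := hA'
  refine ⟨U ∪ V, hU.union hf hV, ?_⟩
  rw [(hU.union hf hV).maxInv_eq_omegaLim hf, omegaLim_union, hU.maxInv_eq_omegaLim hf,
    hV.maxInv_eq_omegaLim hf]

lemma IsAttractor.maxInv_inter (hf : Continuous f) (hA : IsAttractor f A)
    (hA' : IsAttractor f A') : IsAttractor f (MaxInv f (A ∩ A')) := by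
  obtain ⟨U, hU, rfl⟩ := hA
  obtain ⟨V, hV, rfl⟩ := hA'
  refine ⟨U ∩ V, hU.inter hf hV, ?_⟩
  rw [(hU.inter hf hV).maxInv_eq_omegaLim hf, hU.maxInv_eq_omegaLim hf, hV.maxInv_eq_omegaLim hf,
    omegaLim_inter hf (hU.isAttractingNbhd hf).omegaLim_subset
      (hV.isAttractingNbhd hf).omegaLim_subset]

end Compact

/-- Attracting neighborhoods form a lattice and `ω` respects the
lattice operations; consequently attractors form a lattice. -/
theorem attractingNbhd_lattice
    {X : Type*} [MetricSpace X] [CompactSpace X]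
    (f : X → X) (hf : Continuous f) (U U' : Set X)
    (hU : IsAttractingNbhd f U) (hU' : IsAttractingNbhd f U') :
    IsAttractingNbhd f (U ∪ U') ∧ IsAttractingNbhd f (U ∩ U') ∧
    OmegaLim f (U ∪ U') = OmegaLim f U ∪ OmegaLim f U' ∧
    OmegaLim f (U ∩ U') = MaxInv f (OmegaLim f U ∩ OmegaLim f U') ∧
    (∀ A A' : Set X, IsAttractor f A → IsAttractor f A' →
      IsAttractor f (A ∪ A') ∧ IsAttractor f (MaxInv f (A ∩ A'))) :=
  ⟨hU.union hU', hU.inter hU', omegaLim_union,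
    omegaLim_inter hf hU.omegaLim_subset hU'.omegaLim_subset,
    fun _ _ hA hA' => ⟨hA.union hf hA', hA.maxInv_inter hf hA'⟩⟩
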